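/- arXiv:1612.08837 — 8 statements merged into one kernel-verified Lean document; each statement's English description precedes it below -/
import Mathlib

section
/- The map sending x = (x_0, x_1, …, x_m) ∈ A_m to x' = (x_1, …, x_m) ∈ ℤ^m is a bijective isometry from (A_m, d₁) to (ℤ^m, d_a), where d₁(x,y) = (1/2)∑|x_i − y_i| and d_a(u,v) = max(∑_{i: u_i > v_i}(u_i − v_i), ∑_{i: u_i < v_i}(v_i − u_i)). -/
/-- The asymmetric-channel metric on `ℤ^m`. -/
def da {m : ℕ} (u v : Fin m → ℤ) : ℤ :=
  max (∑ i, max (u i - v i) 0) (∑ i, max (v i - u i) 0)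

/-- The map `x = (x_0, …, x_m) ↦ (x_1, …, x_m)` is a bijective isometry
from `(A_m, d₁)` to `(ℤ^m, d_a)`. -/
theorem stmt_2 (m : ℕ) (hm : 1 ≤ m) :
    Function.Bijective
      (fun x : {x : Fin (m + 1) → ℤ // ∑ i, x i = 0} =>
        (fun i : Fin m => x.1 i.succ)) ∧
    ∀ x y : Fin (m + 1) → ℤ, ∑ i, x i = 0 → ∑ i, y i = 0 →
      2 * da (fun i : Fin m => x i.succ) (fun i : Fin m => y i.succ) =
        ∑ i, |x i - y i| := by
  constructor
  · constructor
    · rintro ⟨x, hx⟩ ⟨y, hy⟩ h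
      simp only at h
      refine Subtype.ext (funext fun i => ?_)
      refine Fin.cases ?_ ?_ i
      · dsimp only
        rw [Fin.sum_univ_succ] at hx hy
        have : ∀ j : Fin m, x j.succ = y j.succ := fun j => congrFun h j
        have hs : ∑ j : Fin m, x (Fin.succ j) = ∑ j : Fin m, y (Fin.succ j) :=
          Finset.sum_congr rfl fun j _ => this j
        omega
      · intro j; exact congrFun h j
    · intro u
      refine ⟨⟨fun i => Fin.cases (-∑ j : Fin m, u j) (fun j => u j) i, ?_⟩, ?_⟩
      · rw [Fin.sum_univ_succ]
        simp
      · ext i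
        simp
  · intro x y hx hy
    set P := ∑ i : Fin m, max (x i.succ - y i.succ) 0 with hP
    set N := ∑ i : Fin m, max (y i.succ - x i.succ) 0 with hN
    have hz : ∑ i : Fin (m+1), (x i - y i) = 0 := by
      rw [Finset.sum_sub_distrib, hx, hy]; ring
    rw [Fin.sum_univ_succ] at hz
    have hPN : ∑ i : Fin m, (x i.succ - y i.succ) = P - N := by
      rw [hP, hN, ← Finset.sum_sub_distrib]
      refine Finset.sum_congr rfl fun i _ => ?_
      rcases le_total (x i.succ) (y i.succ) with h | h
      · rw [max_eq_right (by omega), max_eq_left (by omega)]; ring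
      · rw [max_eq_left (by omega), max_eq_right (by omega)]; ring
    have h0 : x 0 - y 0 = N - P := by omega
    have habs : ∑ i : Fin m, |x i.succ - y i.succ| = P + N := by
      rw [hP, hN, ← Finset.sum_add_distrib]
      refine Finset.sum_congr rfl fun i _ => ?_
      rcases le_total (x i.succ) (y i.succ) with h | h
      · rw [max_eq_right (by omega), max_eq_left (by omega), abs_of_nonpos (by omega)]; ring
      · rw [max_eq_left (by omega), max_eq_right (by omega), abs_of_nonneg (by omega)]; ring
    rw [Fin.sum_univ_succ, habs, h0]
    have hPnn : 0 ≤ P := Finset.sum_nonneg fun i _ => le_max_right _ _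
    have hNnn : 0 ≤ N := Finset.sum_nonneg fun i _ => le_max_right _ _
    simp only [da, ← hP, ← hN]
    rcases le_total P N with h | h
    · rw [max_eq_right h, abs_of_nonneg (by omega)]; ring
    · rw [max_eq_left h, abs_of_nonpos (by omega)]; ring
end

section
/- The cardinality of the anticode S_m(r⁺, r⁻) = {x ∈ ℤ^m : (sum of positive coordinates of x) ≤ r⁺ and (sum of absolute values of negative coordinates of x) ≤ r⁻} equals ∑_{j=0}^{min(m, r⁺)} C(m, j)·C(r⁺, j)·C(r⁻ + m − j, m − j). -/
/-!
Split `x ∈ ℤ^m` according to the set `J` of its positive coordinates: on `J` write `x = a + 1`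
with `a ∈ ℕ^J`, off `J` write `x = -b` with `b ∈ ℕ^{Jᶜ}`. The two anticode constraints become
`∑ a + |J| ≤ r⁺` and `∑ b ≤ r⁻`, which by stars and bars have `C(r⁺, |J|)` and
`C(r⁻ + m - |J|, m - |J|)` solutions. Grouping the sets `J` by their size `j` gives the formula;
the terms with `j > r⁺` vanish.
-/

open Finset

section StarsAndBars

variable {ι : Type*} [Fintype ι]

def sumLeEquivSumEqOption (N : ℕ) :
    {f : ι → ℕ // ∑ i, f i ≤ N} ≃ {g : Option ι → ℕ // ∑ o, g o = N} where
  toFun f := ⟨fun o => o.elim (N - ∑ i, f.1 i) f.1, by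
    simpa [Fintype.sum_option] using Nat.sub_add_cancel f.2⟩
  invFun g := ⟨fun i => g.1 (some i), by
    show ∑ i, g.1 (some i) ≤ N
    have := g.2
    rw [Fintype.sum_option] at this
    omega⟩
  left_inv _ := rfl
  right_inv g := by
    have := g.2
    rw [Fintype.sum_option] at this
    ext (_ | i)
    · change N - ∑ i, g.1 (some i) = g.1 none
      omega
    · rfl

instance finite_sum_le (N : ℕ) : Finite {f : ι → ℕ // ∑ i, f i ≤ N} := by
  classical
  exact .of_equiv _ ((Sym.equivNatSumOfFintype (Option ι) N).trans (sumLeEquivSumEqOption N).symm)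

theorem natCard_sum_eq (n : ℕ) :
    Nat.card {f : ι → ℕ // ∑ i, f i = n} = (Fintype.card ι).multichoose n := by
  classical
  rw [← Nat.card_congr (Sym.equivNatSumOfFintype ι n), Sym.natCard_sym_eq_multichoose,
    Nat.card_eq_fintype_card]

theorem natCard_sum_le (N : ℕ) :
    Nat.card {f : ι → ℕ // ∑ i, f i ≤ N} = (N + Fintype.card ι).choose (Fintype.card ι) := by
  rw [Nat.card_congr (sumLeEquivSumEqOption N), natCard_sum_eq, Fintype.card_option,
    Nat.multichoose_eq, Nat.add_right_comm, Nat.add_sub_cancel, add_comm, Nat.choose_symm_add]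

instance finite_sum_add_card_le (r : ℕ) :
    Finite {f : ι → ℕ // ∑ i, f i + Fintype.card ι ≤ r} :=
  .of_injective _
    (Subtype.impEmbedding _ (fun f : ι → ℕ => ∑ i, f i ≤ r) fun _ h => by omega).injective

theorem natCard_sum_add_card_le (r : ℕ) :
    Nat.card {f : ι → ℕ // ∑ i, f i + Fintype.card ι ≤ r} = r.choose (Fintype.card ι) := by
  by_cases h : Fintype.card ι ≤ r
  · simp_rw [← Nat.le_sub_iff_add_le h]
    rw [natCard_sum_le, Nat.sub_add_cancel h]
  · have : IsEmpty {f : ι → ℕ // ∑ i, f i + Fintype.card ι ≤ r} :=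
      ⟨fun f => by have := f.2; omega⟩
    rw [Nat.card_of_isEmpty, Nat.choose_eq_zero_of_lt (not_le.mp h)]

end StarsAndBars

def Equiv.subtypeSigmaEquivSigmaSubtype {α : Type*} {β : α → Type*} (p : ∀ a, β a → Prop) :
    {s : Σ a, β a // p s.1 s.2} ≃ Σ a, {b : β a // p a b} where
  toFun s := ⟨s.1.1, s.1.2, s.2⟩
  invFun s := ⟨⟨s.1, s.2.1⟩, s.2.2⟩

section SignDecomposition

variable {ι : Type*} [Fintype ι] [DecidableEq ι]

def posSupportFiberEquiv (J : Finset ι) :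
    {x : ι → ℤ // univ.filter (0 < x ·) = J} ≃ (J → ℕ) × (↥Jᶜ → ℕ) where
  toFun x := (fun i => (x.1 i).toNat - 1, fun i => (-x.1 i).toNat)
  invFun p := ⟨fun i => if h : i ∈ J then p.1 ⟨i, h⟩ + 1 else -p.2 ⟨i, mem_compl.2 h⟩, by
    ext i
    by_cases h : i ∈ J <;> simp [h]⟩
  left_inv x := by
    have hx (i : ι) : 0 < x.1 i ↔ i ∈ J := by simpa using Finset.ext_iff.mp x.2 i
    ext i
    dsimp only
    split_ifs with h
    · have := (hx i).2 h
      omega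
    · have := mt (hx i).1 h
      omega
  right_inv p := by
    ext i
    · simp [i.2]
    · simp [mem_compl.1 i.2]

def signEquiv : (Σ J : Finset ι, (J → ℕ) × (↥Jᶜ → ℕ)) ≃ (ι → ℤ) :=
  (Equiv.sigmaCongrRight fun J => (posSupportFiberEquiv J).symm).trans (Equiv.sigmaFiberEquiv _)

variable (J : Finset ι) (p : (J → ℕ) × (↥Jᶜ → ℕ))

@[simp]
theorem signEquiv_apply_of_mem (i : J) : signEquiv ⟨J, p⟩ i = p.1 i + 1 :=
  dif_pos i.2

@[simp]
theorem signEquiv_apply_of_mem_compl (i : ↥Jᶜ) : signEquiv ⟨J, p⟩ i = -p.2 i :=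
  dif_neg (mem_compl.1 i.2)

theorem sum_max_signEquiv :
    ∑ i, max (signEquiv ⟨J, p⟩ i) 0 = ((∑ i, p.1 i + Fintype.card J : ℕ) : ℤ) := by
  have hpos (i : J) : max ((p.1 i : ℤ) + 1) 0 = p.1 i + 1 := max_eq_left (by positivity)
  rw [← sum_add_sum_compl J, ← sum_coe_sort J, ← sum_coe_sort Jᶜ]
  simp [hpos, sum_add_distrib]

theorem sum_max_neg_signEquiv :
    ∑ i, max (-signEquiv ⟨J, p⟩ i) 0 = ((∑ i, p.2 i : ℕ) : ℤ) := by
  rw [← sum_add_sum_compl J, ← sum_coe_sort J, ← sum_coe_sort Jᶜ]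
  simp

end SignDecomposition

def anticode (ι : Type*) [Fintype ι] (rp rm : ℕ) : Set (ι → ℤ) :=
  {x | ∑ i, max (x i) 0 ≤ rp ∧ ∑ i, max (-x i) 0 ≤ rm}

theorem natCard_anticode (ι : Type*) [Fintype ι] [DecidableEq ι] (rp rm : ℕ) :
    Nat.card (anticode ι rp rm) =
      ∑ J : Finset ι, rp.choose #J * (rm + (Fintype.card ι - #J)).choose (Fintype.card ι - #J) := by
  let e : anticode ι rp rm ≃ Σ J : Finset ι,
      {a : J → ℕ // ∑ i, a i + Fintype.card J ≤ rp} × {b : ↥Jᶜ → ℕ // ∑ i, b i ≤ rm} :=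
    calc _ ≃ {s // signEquiv s ∈ anticode ι rp rm} := (signEquiv.subtypeEquiv fun _ => Iff.rfl).symm
      _ ≃ Σ J, {p // signEquiv ⟨J, p⟩ ∈ anticode ι rp rm} :=
        Equiv.subtypeSigmaEquivSigmaSubtype fun J p => signEquiv ⟨J, p⟩ ∈ anticode ι rp rm
      _ ≃ _ := Equiv.sigmaCongrRight fun J => (Equiv.subtypeEquivRight fun p => by
          rw [anticode, Set.mem_ofPred_eq, sum_max_signEquiv, sum_max_neg_signEquiv]
          norm_cast).trans Equiv.subtypeProdEquivProd
  rw [Nat.card_congr e, Nat.card_sigma]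
  refine Fintype.sum_congr _ _ fun J => ?_
  rw [Nat.card_prod, natCard_sum_add_card_le, natCard_sum_le, Fintype.card_coe,
    Fintype.card_coe, card_compl]

theorem stmt_6_general (m rp rm : ℕ) :
    Nat.card {x : Fin m → ℤ //
        (∑ i, max (x i) 0) ≤ (rp : ℤ) ∧ (∑ i, max (-x i) 0) ≤ (rm : ℤ)} =
      ∑ j ∈ Finset.range (min m rp + 1),
        m.choose j * rp.choose j * (rm + m - j).choose (m - j) := by
  set f : ℕ → ℕ := fun j => rp.choose j * (rm + (m - j)).choose (m - j)
  have hvanish : ∀ j ∈ range (m + 1), j ∉ range (min m rp + 1) → m.choose j * f j = 0 :=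
    fun j hjm hj => by
      have hrp : rp < j := by rw [mem_range] at hjm hj; omega
      simp [f, Nat.choose_eq_zero_of_lt hrp]
  calc _ = Nat.card (anticode (Fin m) rp rm) := rfl
    _ = ∑ J : Finset (Fin m), f #J := by rw [natCard_anticode, Fintype.card_fin]
    _ = ∑ j ∈ range (m + 1), m.choose j * f j := by
        rw [← powerset_univ, sum_powerset_apply_card f, card_univ, Fintype.card_fin]
        rfl
    _ = _ := by
        rw [← sum_subset (range_subset_range.2 (by omega)) hvanish]
        refine sum_congr rfl fun j hj => ?_
        rw [mul_assoc, Nat.add_sub_assoc (by rw [mem_range] at hj; omega)]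

/-- The cardinality of the anticode `S_m(r⁺, r⁻)`. -/
theorem stmt_6 (m rp rm : ℕ) (hm : 1 ≤ m) :
    Nat.card {x : Fin m → ℤ //
        (∑ i, max (x i) 0) ≤ (rp : ℤ) ∧ (∑ i, max (-x i) 0) ≤ (rm : ℤ)} =
      ∑ j ∈ Finset.range (min m rp + 1),
        m.choose j * rp.choose j * (rm + m - j).choose (m - j) :=
  stmt_6_general m rp rm
end

section
/- A multiset code C ⊆ △_n^{q−1} can correct h_ins insertions, h_del deletions, and h_sub substitutions if and only if it can correct h = h_ins + h_del + 2·h_sub deletions. (Formally: there exist distinct codewords x, y and error patterns consisting of at most h_ins insertions, at most h_del deletions, and at most h_sub substitutions transforming x and y to a common output, if and only if there exist distinct codewords x', y' and deletion patterns of h symbols each, transforming x' and y' to a common output.) -/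
/-- `z` is obtainable from `x` by at most `hins` insertions, at most `hdel` deletions
and at most `hsub` substitutions (deleted and substituted symbols must be present). -/
def CanTransform {q : ℕ} (hins hdel hsub : ℕ) (x z : Fin q → ℤ) : Prop :=
  ∃ a b c d : Fin q → ℤ,
    (∀ i, 0 ≤ a i) ∧ (∀ i, 0 ≤ b i) ∧ (∀ i, 0 ≤ c i) ∧ (∀ i, 0 ≤ d i) ∧
    (∑ i, a i) ≤ (hins : ℤ) ∧ (∑ i, b i) ≤ (hdel : ℤ) ∧
    (∑ i, c i = ∑ i, d i) ∧ (∑ i, c i) ≤ (hsub : ℤ) ∧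
    b + c ≤ x ∧ z = x + a - b - c + d

/-- Splitting lemma: from a nonnegative integer vector one can extract a nonnegative
subvector with any prescribed sum not exceeding the total. -/
lemma split_exists {q : ℕ} (f : Fin q → ℤ) (hf : ∀ i, 0 ≤ f i) :
    ∀ k : ℕ, (k : ℤ) ≤ ∑ i, f i →
    ∃ u : Fin q → ℤ, (∀ i, 0 ≤ u i) ∧ (∀ i, u i ≤ f i) ∧ ∑ i, u i = (k : ℤ) := by
  intro k
  induction k with
  | zero => exact fun _ => ⟨0, fun i => le_refl 0, fun i => hf i, by simp⟩
  | succ m ih =>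
    intro hk
    obtain ⟨u, hu0, huf, hus⟩ := ih (by push_cast at hk ⊢; linarith)
    have hex : ∃ i, u i < f i := by
      by_contra hcon
      push_neg at hcon
      have h1 : ∑ i, f i ≤ ∑ i, u i := Finset.sum_le_sum fun i _ => hcon i
      rw [hus] at h1
      push_cast at hk
      linarith
    obtain ⟨i, hi⟩ := hex
    refine ⟨fun j => u j + (if j = i then 1 else 0), ?_, ?_, ?_⟩
    · intro j
      by_cases hj : j = i
      · simp [hj]
        linarith [hu0 i]
      · simp only [if_neg hj, add_zero]
        exact hu0 j
    · intro j
      by_cases hj : j = i <;> simp [hj]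
      · subst hj; linarith
      · exact huf j
    · rw [Finset.sum_add_distrib, hus]
      simp

/-- A multiset code can correct `h_ins` insertions, `h_del` deletions and
`h_sub` substitutions iff it can correct `h = h_ins + h_del + 2 h_sub` deletions. -/
theorem stmt_10 (q n hins hdel hsub : ℕ) (hq : 2 ≤ q)
    (hn : hins + hdel + 2 * hsub ≤ n)
    (C : Set (Fin q → ℤ))
    (hC : ∀ x ∈ C, (∀ i, 0 ≤ x i) ∧ ∑ i, x i = n) :
    (∃ x ∈ C, ∃ y ∈ C, x ≠ y ∧ ∃ z : Fin q → ℤ,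
        CanTransform hins hdel hsub x z ∧ CanTransform hins hdel hsub y z) ↔
    (∃ x ∈ C, ∃ y ∈ C, x ≠ y ∧ ∃ f g : Fin q → ℤ,
        (∀ i, 0 ≤ f i) ∧ (∀ i, 0 ≤ g i) ∧
        (∑ i, f i = ((hins + hdel + 2 * hsub : ℕ) : ℤ)) ∧
        (∑ i, g i = ((hins + hdel + 2 * hsub : ℕ) : ℤ)) ∧
        f ≤ x ∧ g ≤ y ∧ x - f = y - g) := by
  constructor
  · rintro ⟨x, hx, y, hy, hxy, z, ⟨a, b, c, d, ha0, hb0, hc0, hd0, haS, hbS, hcdS, hcS, hbcx, hz⟩,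
      ⟨a', b', c', d', ha0', hb0', hc0', hd0', haS', hbS', hcdS', hcS', hbcy, hz'⟩⟩
    obtain ⟨hx0, hxS⟩ := hC x hx
    obtain ⟨hy0, hyS⟩ := hC y hy
    -- pointwise: min (x i) (y i) ≥ (x i - b i - c i) + (y i - b' i - c' i) - z i
    have hpt : ∀ i, (x i - b i - c i) + (y i - b' i - c' i) - z i ≤ min (x i) (y i) := by
      intro i
      have h1 : b i + c i ≤ x i := hbcx i
      have h2 : b' i + c' i ≤ y i := hbcy i
      have h3 : x i - b i - c i ≤ z i := by
        have := congrFun hz i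
        simp only [Pi.add_apply, Pi.sub_apply] at this
        have := ha0 i; have := hd0 i
        omega
      have h4 : y i - b' i - c' i ≤ z i := by
        have := congrFun hz' i
        simp only [Pi.add_apply, Pi.sub_apply] at this
        have := ha0' i; have := hd0' i
        omega
      rcases le_total (x i - b i - c i) (y i - b' i - c' i) with hle | hle
      · have : x i - b i - c i ≤ x i := by have := hb0 i; have := hc0 i; omega
        simp only [le_min_iff]
        constructor
        · linarith
        · have : x i - b i - c i ≤ y i := le_trans hle (by have := hb0' i; have := hc0' i; omega)
          linarith
      · simp only [le_min_iff]
        constructor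
        · have : y i - b' i - c' i ≤ x i :=
            le_trans hle (by have := hb0 i; have := hc0 i; omega)
          linarith
        · have : y i - b' i - c' i ≤ y i := by have := hb0' i; have := hc0' i; omega
          linarith
    have hsumz : ∑ i, z i = (n : ℤ) + ∑ i, a i - ∑ i, b i := by
      rw [hz]
      simp only [Pi.add_apply, Pi.sub_apply]
      rw [show (∑ i, (x i + a i - b i - c i + d i)) =
        (∑ i, x i) + (∑ i, a i) - (∑ i, b i) - (∑ i, c i) + (∑ i, d i) by
          rw [Finset.sum_add_distrib, Finset.sum_sub_distrib, Finset.sum_sub_distrib,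
            Finset.sum_add_distrib]]
      rw [hxS, ← hcdS]
      ring
    have hminsum : ((n : ℤ) - (hins + hdel + 2 * hsub : ℕ)) ≤ ∑ i, min (x i) (y i) := by
      have h1 : ∑ i, ((x i - b i - c i) + (y i - b' i - c' i) - z i) ≤ ∑ i, min (x i) (y i) :=
        Finset.sum_le_sum fun i _ => hpt i
      have h2 : ∑ i, ((x i - b i - c i) + (y i - b' i - c' i) - z i) =
          (∑ i, x i) - (∑ i, b i) - (∑ i, c i) + ((∑ i, y i) - (∑ i, b' i) - (∑ i, c' i))
            - ∑ i, z i := by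
        simp only [Finset.sum_sub_distrib, Finset.sum_add_distrib]
      rw [h2, hxS, hyS, hsumz] at h1
      push_cast at h1 ⊢
      linarith
    -- extract w ≤ min x y with sum n - h
    set hh : ℕ := hins + hdel + 2 * hsub with hhdef
    have hmin0 : ∀ i, 0 ≤ min (x i) (y i) := fun i => le_min (hx0 i) (hy0 i)
    have hcast : ((n - hh : ℕ) : ℤ) = (n : ℤ) - (hh : ℤ) := by
      have : hh ≤ n := hn
      omega
    obtain ⟨w, hw0, hwm, hws⟩ := split_exists (fun i => min (x i) (y i)) hmin0 (n - hh)
      (by rw [hcast]; exact hminsum)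
    refine ⟨x, hx, y, hy, hxy, x - w, y - w, ?_, ?_, ?_, ?_, ?_, ?_, ?_⟩
    · intro i
      simp only [Pi.sub_apply]
      have := hwm i
      have := le_min_iff.mp (le_of_eq (rfl : min (x i) (y i) = min (x i) (y i)))
      have hwx : w i ≤ x i := le_trans (hwm i) (min_le_left _ _)
      omega
    · intro i
      simp only [Pi.sub_apply]
      have hwy : w i ≤ y i := le_trans (hwm i) (min_le_right _ _)
      omega
    · rw [show (∑ i, (x - w) i) = (∑ i, x i) - ∑ i, w i by
        simp only [Pi.sub_apply]; rw [Finset.sum_sub_distrib]]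
      rw [hxS, hws, hcast]; ring
    · rw [show (∑ i, (y - w) i) = (∑ i, y i) - ∑ i, w i by
        simp only [Pi.sub_apply]; rw [Finset.sum_sub_distrib]]
      rw [hyS, hws, hcast]; ring
    · intro i; simp only [Pi.sub_apply]; have := hw0 i; omega
    · intro i; simp only [Pi.sub_apply]; have := hw0 i; omega
    · funext i; simp only [Pi.sub_apply]; ring
  · rintro ⟨x, hx, y, hy, hxy, f, g, hf0, hg0, hfS, hgS, hfx, hgy, hfg⟩
    obtain ⟨hx0, hxS⟩ := hC x hx
    obtain ⟨hy0, hyS⟩ := hC y hy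
    -- split f = b + c + r with ∑b = hdel, ∑c = hsub, ∑r = hins + hsub
    obtain ⟨r, hr0, hrf, hrS⟩ := split_exists f hf0 (hins + hsub)
      (by rw [hfS]; push_cast; linarith)
    have hfr0 : ∀ i, 0 ≤ f i - r i := fun i => by have := hrf i; omega
    have hfrS : ∑ i, (f i - r i) = ((hdel + hsub : ℕ) : ℤ) := by
      rw [Finset.sum_sub_distrib, hfS, hrS]; push_cast; ring
    obtain ⟨b, hb0, hbfr, hbS⟩ := split_exists (fun i => f i - r i) hfr0 hdel
      (by rw [hfrS]; push_cast; linarith)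
    set c : Fin q → ℤ := fun i => f i - r i - b i with hcdef
    have hc0 : ∀ i, 0 ≤ c i := fun i => by have := hbfr i; simpa [hcdef] using this
    have hcS : ∑ i, c i = (hsub : ℤ) := by
      simp only [hcdef]
      rw [Finset.sum_sub_distrib, hfrS, hbS]; push_cast; ring
    -- split g = b' + c' + r'
    obtain ⟨r', hr0', hrg, hrS'⟩ := split_exists g hg0 (hins + hsub)
      (by rw [hgS]; push_cast; linarith)
    have hgr0 : ∀ i, 0 ≤ g i - r' i := fun i => by have := hrg i; omega
    have hgrS : ∑ i, (g i - r' i) = ((hdel + hsub : ℕ) : ℤ) := by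
      rw [Finset.sum_sub_distrib, hgS, hrS']; push_cast; ring
    obtain ⟨b', hb0', hbgr, hbS'⟩ := split_exists (fun i => g i - r' i) hgr0 hdel
      (by rw [hgrS]; push_cast; linarith)
    set c' : Fin q → ℤ := fun i => g i - r' i - b' i with hcdef'
    have hc0' : ∀ i, 0 ≤ c' i := fun i => by have := hbgr i; simpa [hcdef'] using this
    have hcS' : ∑ i, c' i = (hsub : ℤ) := by
      simp only [hcdef']
      rw [Finset.sum_sub_distrib, hgrS, hbS']; push_cast; ring
    -- split r' = a + d with ∑a = hins, ∑d = hsub (for the x-side); r = a' + d'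
    obtain ⟨a, ha0, har, haS⟩ := split_exists r' hr0' hins (by rw [hrS']; push_cast; linarith)
    set d : Fin q → ℤ := fun i => r' i - a i with hddef
    have hd0 : ∀ i, 0 ≤ d i := fun i => by have := har i; simpa [hddef] using this
    have hdS : ∑ i, d i = (hsub : ℤ) := by
      simp only [hddef]
      rw [Finset.sum_sub_distrib, hrS', haS]; push_cast; ring
    obtain ⟨a', ha0', har', haS'⟩ := split_exists r hr0 hins (by rw [hrS]; push_cast; linarith)
    set d' : Fin q → ℤ := fun i => r i - a' i with hddef'
    have hd0' : ∀ i, 0 ≤ d' i := fun i => by have := har' i; simpa [hddef'] using this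
    have hdS' : ∑ i, d' i = (hsub : ℤ) := by
      simp only [hddef']
      rw [Finset.sum_sub_distrib, hrS, haS']; push_cast; ring
    refine ⟨x, hx, y, hy, hxy, x - f + r + r', ?_, ?_⟩
    · refine ⟨a, b, c, d, ha0, hb0, hc0, hd0, le_of_eq haS, le_of_eq hbS,
        by rw [hcS, hdS], le_of_eq hcS, ?_, ?_⟩
      · intro i
        simp only [Pi.add_apply, hcdef]
        have h1 : f i ≤ x i := hfx i
        have h2 : 0 ≤ r i := hr0 i
        omega
      · funext i
        simp only [Pi.add_apply, Pi.sub_apply, hcdef, hddef]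
        ring
    · refine ⟨a', b', c', d', ha0', hb0', hc0', hd0', le_of_eq haS', le_of_eq hbS',
        by rw [hcS', hdS'], le_of_eq hcS', ?_, ?_⟩
      · intro i
        simp only [Pi.add_apply, hcdef']
        have h1 : g i ≤ y i := hgy i
        have h2 : 0 ≤ r' i := hr0' i
        omega
      · funext i
        have hfgi : x i - f i = y i - g i := by
          have := congrFun hfg i
          simpa using this
        simp only [Pi.add_apply, Pi.sub_apply, hcdef', hddef']
        omega
end

section
/- Let G be a finite abelian group and B = {b_0 = 0, b_1, …, b_m} ⊆ G a B_h set (all sums of at most h elements of B with repetition allowed are distinct). Then the lattice L = {x ∈ ℤ^m : ∑_{i=1}^m x_i·b_i = 0} has minimum d_a-distance greater than h, i.e., for any distinct x, y ∈ L, d_a(x,y) > h. -/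
/-- If `{0, b_1, …, b_m}` is a `B_h` set in a finite abelian group `G`
(all sums of at most `h` of the `b_i` with repetition are distinct), then the lattice
`L = {x ∈ ℤ^m : ∑ x_i • b_i = 0}` has minimum `d_a`-distance greater than `h`. -/
theorem stmt_12 (m h : ℕ) (hm : 1 ≤ m) (hh : 1 ≤ h)
    (G : Type*) [AddCommGroup G] [Fintype G] (b : Fin m → G)
    (hB : ∀ f g : Fin m → ℕ, (∑ i, f i ≤ h) → (∑ i, g i ≤ h) →
      (∑ i, f i • b i = ∑ i, g i • b i) → f = g) :
    ∀ x y : Fin m → ℤ, (∑ i, x i • b i = 0) → (∑ i, y i • b i = 0) →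
      x ≠ y → (h : ℤ) < da x y := by
  intro x y hx hy hxy
  by_contra hle
  push_neg at hle
  unfold da at hle
  have h1 : (∑ i, max (x i - y i) 0) ≤ (h : ℤ) := le_trans (le_max_left _ _) hle
  have h2 : (∑ i, max (y i - x i) 0) ≤ (h : ℤ) := le_trans (le_max_right _ _) hle
  set f : Fin m → ℕ := fun i => (max (x i - y i) 0).toNat with hf
  set g : Fin m → ℕ := fun i => (max (y i - x i) 0).toNat with hg
  have hfc : ∀ i, (f i : ℤ) = max (x i - y i) 0 := fun i =>
    Int.toNat_of_nonneg (le_max_right _ _)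
  have hgc : ∀ i, (g i : ℤ) = max (y i - x i) 0 := fun i =>
    Int.toNat_of_nonneg (le_max_right _ _)
  have hdiff : ∀ i, (f i : ℤ) - (g i : ℤ) = x i - y i := by
    intro i
    rw [hfc, hgc]
    rcases le_total (x i - y i) 0 with hc | hc
    · rw [max_eq_right hc, max_eq_left (by omega)]; omega
    · rw [max_eq_left hc, max_eq_right (by omega)]; omega
  have hfs : ∑ i, f i ≤ h := by
    have : ((∑ i, f i : ℕ) : ℤ) ≤ (h : ℤ) := by
      push_cast
      calc ∑ i, (f i : ℤ) = ∑ i, max (x i - y i) 0 := Finset.sum_congr rfl (fun i _ => hfc i)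
        _ ≤ h := h1
    exact_mod_cast this
  have hgs : ∑ i, g i ≤ h := by
    have : ((∑ i, g i : ℕ) : ℤ) ≤ (h : ℤ) := by
      push_cast
      calc ∑ i, (g i : ℤ) = ∑ i, max (y i - x i) 0 := Finset.sum_congr rfl (fun i _ => hgc i)
        _ ≤ h := h2
    exact_mod_cast this
  have hsum : ∑ i, f i • b i = ∑ i, g i • b i := by
    have key : ∑ i, f i • b i - ∑ i, g i • b i = 0 := by
      rw [← Finset.sum_sub_distrib]
      have : ∀ i ∈ Finset.univ, f i • b i - g i • b i = x i • b i - y i • b i := by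
        intro i _
        have : ((f i : ℤ) - (g i : ℤ)) • b i = (x i - y i) • b i := by rw [hdiff]
        rw [sub_smul, sub_smul, natCast_zsmul, natCast_zsmul] at this
        exact this
      rw [Finset.sum_congr rfl this, Finset.sum_sub_distrib, hx, hy, sub_zero]
    exact sub_eq_zero.mp key
  have := hB f g hfs hgs hsum
  apply hxy
  funext i
  have hfg : f i = g i := congrFun this i
  have := hdiff i
  omega
end

section
/- Conversely, if L ⊆ ℤ^m is a subgroup with minimum d_a-distance greater than h (d_a(x,y) > h for all distinct x, y ∈ L), then in the quotient group G = ℤ^m / L, the images of 0, e_1, …, e_m (the standard basis vectors) form a B_h set of cardinality m + 1. -/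
/-- If `L ⊆ ℤ^m` is a subgroup of minimum `d_a`-distance greater
than `h`, then in `G = ℤ^m / L` the images of `0, e_1, …, e_m` form a `B_h` set
of cardinality `m + 1`. -/
theorem stmt_13 (m h : ℕ) (hm : 1 ≤ m) (hh : 1 ≤ h)
    (L : AddSubgroup (Fin m → ℤ))
    (hL : ∀ x ∈ L, ∀ y ∈ L, x ≠ y → (h : ℤ) < da x y) :
    (∀ f g : Fin m → ℕ, (∑ i, f i ≤ h) → (∑ i, g i ≤ h) →
      (∑ i, f i • ((QuotientAddGroup.mk (Pi.single i 1 : Fin m → ℤ)) : (Fin m → ℤ) ⧸ L) =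
        ∑ i, g i • ((QuotientAddGroup.mk (Pi.single i 1 : Fin m → ℤ)) : (Fin m → ℤ) ⧸ L)) →
      f = g) ∧
    Function.Injective
      (fun i : Fin m => ((QuotientAddGroup.mk (Pi.single i 1 : Fin m → ℤ)) : (Fin m → ℤ) ⧸ L)) ∧
    (∀ i : Fin m, ((QuotientAddGroup.mk (Pi.single i 1 : Fin m → ℤ)) : (Fin m → ℤ) ⧸ L) ≠ 0) := by
  have hcast : ∀ i : Fin m, (fun k => ((Pi.single i 1 : Fin m → ℕ) k : ℤ))
      = (Pi.single i 1 : Fin m → ℤ) := by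
    intro i; funext k; simp [Pi.single_apply]
  have hmk : ∀ f : Fin m → ℕ,
      (∑ i, f i • ((QuotientAddGroup.mk (Pi.single i 1 : Fin m → ℤ)) : (Fin m → ℤ) ⧸ L))
        = QuotientAddGroup.mk (fun j => (f j : ℤ)) := by
    intro f
    have h1 : (fun j => (f j : ℤ)) = ∑ i, f i • (Pi.single i 1 : Fin m → ℤ) := by
      funext j
      simp [Finset.sum_apply, Pi.single_apply]
    calc ∑ i, f i • ((QuotientAddGroup.mk (Pi.single i 1 : Fin m → ℤ)) : (Fin m → ℤ) ⧸ L)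
        = ∑ i, ((QuotientAddGroup.mk (f i • (Pi.single i 1 : Fin m → ℤ))) : (Fin m → ℤ) ⧸ L) := by
          refine Finset.sum_congr rfl fun i _ => ?_
          rw [QuotientAddGroup.mk_nsmul]
      _ = QuotientAddGroup.mk (∑ i, f i • (Pi.single i 1 : Fin m → ℤ)) := by
          exact (map_sum (QuotientAddGroup.mk' L) (fun i => f i • (Pi.single i 1 : Fin m → ℤ)) Finset.univ).symm
      _ = _ := by rw [← h1]
  have key : ∀ f g : Fin m → ℕ, (∑ i, f i ≤ h) → (∑ i, g i ≤ h) →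
      (∑ i, f i • ((QuotientAddGroup.mk (Pi.single i 1 : Fin m → ℤ)) : (Fin m → ℤ) ⧸ L) =
        ∑ i, g i • ((QuotientAddGroup.mk (Pi.single i 1 : Fin m → ℤ)) : (Fin m → ℤ) ⧸ L)) →
      f = g := by
    intro f g hf hg heq
    rw [hmk f, hmk g, QuotientAddGroup.eq] at heq
    by_contra hne
    set y : Fin m → ℤ := -(fun j => (f j : ℤ)) + (fun j => (g j : ℤ)) with hy
    have hy0 : y ≠ 0 := by
      intro h0
      apply hne
      funext j
      have := congrFun h0 j
      simp [hy] at this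
      omega
    have hlt := hL y heq 0 L.zero_mem hy0
    have hb1 : ∑ i, max (y i - 0) 0 ≤ (h : ℤ) := by
      calc ∑ i, max (y i - 0) 0 ≤ ∑ i, (g i : ℤ) := by
            refine Finset.sum_le_sum fun i _ => ?_
            have : y i = -(f i : ℤ) + g i := rfl
            rw [this]
            exact max_le (by omega) (by positivity)
        _ ≤ (h : ℤ) := by exact_mod_cast Nat.cast_le.mpr hg
    have hb2 : ∑ i, max (0 - y i) 0 ≤ (h : ℤ) := by
      calc ∑ i, max (0 - y i) 0 ≤ ∑ i, (f i : ℤ) := by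
            refine Finset.sum_le_sum fun i _ => ?_
            have : y i = -(f i : ℤ) + g i := rfl
            rw [this]
            exact max_le (by omega) (by positivity)
        _ ≤ (h : ℤ) := by exact_mod_cast Nat.cast_le.mpr hf
    have : da y 0 ≤ (h : ℤ) := by
      unfold da
      simp only [Pi.zero_apply]
      exact max_le hb1 hb2
    omega
  refine ⟨key, ?_, ?_⟩
  · intro i j hij
    simp only at hij
    have hmain := key (Pi.single i 1) (Pi.single j 1) (by simpa using hh) (by simpa using hh) (by rw [hmk, hmk]; simp only [hcast]; exact hij)
    by_contra hne
    have := congrFun hmain i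
    simp [Pi.single_apply, hne] at this
  · intro i h0
    have hmain := key (Pi.single i 1) 0 (by simpa using hh) (by simp)
      (by rw [hmk, hmk]; simp only [hcast]
          have h2 : (fun j => (((0 : Fin m → ℕ) j : ℤ))) = (0 : Fin m → ℤ) := by
            funext k; simp
          rw [h2, QuotientAddGroup.mk_zero]; exact h0)
    have := congrFun hmain i
    simp [Pi.single_apply] at this
end

section
/- Let G be a finite abelian group, B = {b_0, …, b_{q−1}} ⊆ G a B_h set, and b ∈ G. Then the code C = {x ∈ △_n^{q−1} : ∑_{i=0}^{q−1} x_i·b_i = b} can correct h deletions: there are no distinct x, y ∈ C and nonnegative vectors f, g with ∑ f_i = ∑ g_i = h, f ≤ x, g ≤ y, and x − f = y − g. -/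
/-- If `{b_0, …, b_{q−1}}` is a `B_h` set in a finite abelian group `G`
(all sums of `h` elements with repetition are distinct), then the multiset code
`C = {x ∈ △_n^{q−1} : ∑ x_i • b_i = b}` can correct `h` deletions. -/
theorem stmt_14 (q n h : ℕ) (hq : 2 ≤ q) (hn : h < n) (hh : 1 ≤ h)
    (G : Type*) [AddCommGroup G] [Fintype G] (b : Fin q → G) (c : G)
    (hB : ∀ f g : Fin q → ℕ, (∑ i, f i = h) → (∑ i, g i = h) →
      (∑ i, f i • b i = ∑ i, g i • b i) → f = g) :
    ¬ ∃ x y : Fin q → ℤ,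
        ((∀ i, 0 ≤ x i) ∧ (∑ i, x i = n) ∧ ∑ i, x i • b i = c) ∧
        ((∀ i, 0 ≤ y i) ∧ (∑ i, y i = n) ∧ ∑ i, y i • b i = c) ∧
        x ≠ y ∧ ∃ f g : Fin q → ℤ,
          (∀ i, 0 ≤ f i) ∧ (∀ i, 0 ≤ g i) ∧
          (∑ i, f i = (h : ℤ)) ∧ (∑ i, g i = (h : ℤ)) ∧
          f ≤ x ∧ g ≤ y ∧ x - f = y - g := by
  rintro ⟨x, y, ⟨hx0, hxn, hxb⟩, ⟨hy0, hyn, hyb⟩, hxy, f, g, hf0, hg0, hfs, hgs, hfx, hgy, heq⟩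
  -- from x - f = y - g we get x + g = y + f
  have hkey : x + g = y + f := by
    have := heq
    funext i
    have := congrFun heq i
    simp only [Pi.sub_apply] at this
    simp only [Pi.add_apply]
    linarith
  -- sums of b values
  have hsum : ∑ i, g i • b i = ∑ i, f i • b i := by
    have h1 : ∑ i, (x i + g i) • b i = ∑ i, (y i + f i) • b i := by
      refine Finset.sum_congr rfl fun i _ => ?_
      have hi := congrFun hkey i
      simp only [Pi.add_apply] at hi
      rw [hi]
    simp only [add_smul, Finset.sum_add_distrib, hxb, hyb] at h1
    exact add_left_cancel h1
  set f' : Fin q → ℕ := fun i => (f i).toNat with hf'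
  set g' : Fin q → ℕ := fun i => (g i).toNat with hg'
  have hfc : ∀ i, (f' i : ℤ) = f i := fun i => Int.toNat_of_nonneg (hf0 i)
  have hgc : ∀ i, (g' i : ℤ) = g i := fun i => Int.toNat_of_nonneg (hg0 i)
  have hfs' : ∑ i, f' i = h := by
    have : ((∑ i, f' i : ℕ) : ℤ) = (h : ℤ) := by
      push_cast
      rw [Finset.sum_congr rfl fun i _ => hfc i]; exact hfs
    exact_mod_cast this
  have hgs' : ∑ i, g' i = h := by
    have : ((∑ i, g' i : ℕ) : ℤ) = (h : ℤ) := by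
      push_cast
      rw [Finset.sum_congr rfl fun i _ => hgc i]; exact hgs
    exact_mod_cast this
  have hsb : ∑ i, f' i • b i = ∑ i, g' i • b i := by
    have h1 : ∀ i, f' i • b i = f i • b i := fun i => by
      rw [← hfc i, natCast_zsmul]
    have h2 : ∀ i, g' i • b i = g i • b i := fun i => by
      rw [← hgc i, natCast_zsmul]
    rw [Finset.sum_congr rfl fun i _ => h1 i, Finset.sum_congr rfl fun i _ => h2 i]
    exact hsum.symm
  have hfg : f' = g' := hB f' g' hfs' hgs' hsb
  have hfgZ : f = g := by
    funext i
    rw [← hfc i, ← hgc i, congrFun hfg i]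
  apply hxy
  funext i
  have := congrFun heq i
  simp only [Pi.sub_apply] at this
  rw [congrFun hfgZ i] at this
  linarith
end

section
/- For m ≥ 1 and r ≥ 1, the volume of the convex hull of the ball S_m(r) = S_m(r,r) ⊂ ℤ^m (viewed as a subset of ℝ^m) equals (r^m / m!)·C(2m, m). -/
/-!
Write `S m a b` for the set of `x : Fin m → ℝ` whose positive parts sum to at most `a` and whose
negative parts sum to at most `b`. Slicing `S (m + 1) a b` at `x 0 = t` gives
`S m (a - t⁺) (b - t⁻)`, so its volume `V (m + 1) a b` equals
`∫₀ᵇ V m a s ds + ∫₀ᵃ V m s b ds`. The polynomial `∑_{i+j=m} C(m,i) aⁱ/i! bʲ/j!` satisfies the same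
recursion by Pascal's rule, hence is the volume; at `a = b = r` it is
`rᵐ/m! ∑_{i+j=m} C(m,i) C(m,j) = rᵐ/m! C(2m,m)` by Vandermonde's identity.
-/

open MeasureTheory Finset
open scoped Nat

noncomputable def volPoly (m : ℕ) (a b : ℝ) : ℝ :=
  ∑ ij ∈ antidiagonal m, (m.choose ij.1 : ℝ) * (a ^ ij.1 / ij.1 ! * (b ^ ij.2 / ij.2 !))

lemma volPoly_nonneg (m : ℕ) {a b : ℝ} (ha : 0 ≤ a) (hb : 0 ≤ b) : 0 ≤ volPoly m a b :=
  sum_nonneg fun _ _ => by positivity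

@[fun_prop]
lemma continuous_volPoly (m : ℕ) : Continuous fun p : ℝ × ℝ => volPoly m p.1 p.2 := by
  unfold volPoly; fun_prop

lemma integral_pow_div_factorial (n : ℕ) (b : ℝ) :
    ∫ s in 0..b, s ^ n / n ! = b ^ (n + 1) / (n + 1)! := by
  rw [intervalIntegral.integral_div, integral_pow, Nat.factorial_succ]
  push_cast
  field_simp
  ring

lemma integral_volPoly_right (m : ℕ) (a b : ℝ) :
    ∫ s in 0..b, volPoly m a s =
      ∑ ij ∈ antidiagonal m,
        (m.choose ij.1 : ℝ) * (a ^ ij.1 / ij.1 ! * (b ^ (ij.2 + 1) / (ij.2 + 1)!)) := by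
  unfold volPoly
  rw [intervalIntegral.integral_finsetSum fun _ _ => by
    apply Continuous.intervalIntegrable; fun_prop]
  refine sum_congr rfl fun ij _ => ?_
  rw [intervalIntegral.integral_const_mul, intervalIntegral.integral_const_mul,
    integral_pow_div_factorial]

lemma integral_volPoly_left (m : ℕ) (a b : ℝ) :
    ∫ s in 0..a, volPoly m s b =
      ∑ ij ∈ antidiagonal m,
        (m.choose ij.2 : ℝ) * (a ^ (ij.1 + 1) / (ij.1 + 1)! * (b ^ ij.2 / ij.2 !)) := by
  unfold volPoly
  rw [intervalIntegral.integral_finsetSum fun _ _ => by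
    apply Continuous.intervalIntegrable; fun_prop]
  refine sum_congr rfl fun ij hij => ?_
  rw [← Nat.choose_symm_of_eq_add (mem_antidiagonal.mp hij).symm]
  simp_rw [mul_comm (_ / _ : ℝ) (b ^ ij.2 / _), ← mul_assoc]
  rw [intervalIntegral.integral_const_mul, integral_pow_div_factorial]

lemma volPoly_succ (m : ℕ) (a b : ℝ) :
    volPoly (m + 1) a b = (∫ s in 0..b, volPoly m a s) + ∫ s in 0..a, volPoly m s b := by
  rw [integral_volPoly_right, integral_volPoly_left]
  exact sum_antidiagonal_choose_succ_mul (fun i j => a ^ i / i ! * (b ^ j / j !)) m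

lemma volPoly_self (m : ℕ) (r : ℝ) : volPoly m r r = r ^ m / m ! * (2 * m).choose m := by
  have hterm : ∀ ij ∈ antidiagonal m,
      (m.choose ij.1 : ℝ) * (r ^ ij.1 / ij.1 ! * (r ^ ij.2 / ij.2 !)) =
        r ^ m / m ! * (m.choose ij.1 * m.choose ij.2 : ℕ) := by
    rintro ⟨i, j⟩ hij
    obtain rfl : i + j = m := mem_antidiagonal.mp hij
    have hfact : ((i + j).choose j : ℝ) * i ! * j ! = (i + j)! := by
      exact_mod_cast Nat.add_choose_mul_factorial_mul_factorial i j
    have hchoose : ((i + j).choose j : ℝ) ≠ 0 := by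
      exact_mod_cast (Nat.choose_pos (Nat.le_add_left j i)).ne'
    push_cast
    rw [← hfact, pow_add]
    field_simp
  rw [volPoly, sum_congr rfl hterm, ← mul_sum, ← Nat.cast_sum, ← Nat.add_choose_eq, two_mul]

def posNegBall (m : ℕ) (a b : ℝ) : Set (Fin m → ℝ) :=
  {x | (∑ i, max (x i) 0) ≤ a ∧ (∑ i, max (-x i) 0) ≤ b}

lemma posNegBall_eq_empty {m : ℕ} {a b : ℝ} (h : a < 0 ∨ b < 0) : posNegBall m a b = ∅ := by
  refine Set.eq_empty_of_forall_notMem fun x ⟨hpos, hneg⟩ => ?_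
  have : (0 : ℝ) ≤ ∑ i, max (x i) 0 := sum_nonneg fun _ _ => le_max_right _ _
  have : (0 : ℝ) ≤ ∑ i, max (-x i) 0 := sum_nonneg fun _ _ => le_max_right _ _
  rcases h with h | h <;> linarith

lemma volume_posNegBall_succ (m : ℕ) (a b : ℝ) :
    volume (posNegBall (m + 1) a b) =
      ∫⁻ t, volume (posNegBall m (a - max t 0) (b - max (-t) 0)) := by
  set S : Set (ℝ × (Fin m → ℝ)) :=
    {p | ∑ i, max (p.2 i) 0 ≤ a - max p.1 0 ∧ ∑ i, max (-p.2 i) 0 ≤ b - max (-p.1) 0} with hS_def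
  have hS : MeasurableSet S := by
    rw [hS_def, Set.ofPred_and]
    refine IsClosed.measurableSet ((isClosed_le ?_ ?_).inter (isClosed_le ?_ ?_)) <;> fun_prop
  have hpre : posNegBall (m + 1) a b =
      MeasurableEquiv.piFinSuccAbove (fun _ => ℝ) 0 ⁻¹' S := by
    ext x
    simp [posNegBall, S, Fin.sum_univ_succ, Fin.insertNthEquiv, Fin.removeNth_zero, Fin.tail,
      le_sub_iff_add_le']
  rw [hpre, (volume_preserving_piFinSuccAbove (fun _ => ℝ) 0).measure_preimage
    hS.nullMeasurableSet, Measure.volume_eq_prod, Measure.prod_apply hS]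
  rfl

lemma support_volume_posNegBall_slice_subset (m : ℕ) (a b : ℝ) :
    Function.support (fun t => volume (posNegBall m (a - max t 0) (b - max (-t) 0))) ⊆
      Set.Icc (-b) a := by
  refine Function.support_subset_iff'.mpr fun t ht => ?_
  rw [posNegBall_eq_empty, measure_empty]
  rcases not_and_or.mp ht with h | h
  · right; linarith [le_max_left (-t) 0]
  · left; linarith [le_max_left t 0]

lemma lintegral_Ioc_ofReal_eq_intervalIntegral {f : ℝ → ℝ} {c d : ℝ}
    (hf : IntegrableOn f (Set.Ioc c d)) (hcd : c ≤ d) (hf_nonneg : ∀ t ∈ Set.Ioc c d, 0 ≤ f t) :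
    ∫⁻ t in Set.Ioc c d, ENNReal.ofReal (f t) = ENNReal.ofReal (∫ t in c..d, f t) := by
  rw [intervalIntegral.integral_of_le hcd, ofReal_integral_eq_lintegral_ofReal hf
    (ae_restrict_of_forall_mem measurableSet_Ioc hf_nonneg)]

theorem volume_posNegBall (m : ℕ) {a b : ℝ} (ha : 0 ≤ a) (hb : 0 ≤ b) :
    volume (posNegBall m a b) = ENNReal.ofReal (volPoly m a b) := by
  induction m generalizing a b with
  | zero =>
    have huniv : posNegBall 0 a b = Set.univ := by simp [posNegBall, ha, hb]
    rw [huniv, volume_pi, Measure.pi_univ]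
    simp [volPoly]
  | succ m ih =>
    set g : ℝ → ENNReal := fun t => volume (posNegBall m (a - max t 0) (b - max (-t) 0))
    have hneg : ∫⁻ t in Set.Ioc (-b) 0, g t = ENNReal.ofReal (∫ s in 0..b, volPoly m a s) :=
      calc ∫⁻ t in Set.Ioc (-b) 0, g t
          = ∫⁻ t in Set.Ioc (-b) 0, ENNReal.ofReal (volPoly m a (b + t)) := by
            refine setLIntegral_congr_fun measurableSet_Ioc fun t ht => ?_
            rw [← ih ha (by linarith [ht.1])]
            simp only [g, max_eq_right ht.2, max_eq_left (neg_nonneg.mpr ht.2), sub_zero,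
              sub_neg_eq_add]
        _ = ENNReal.ofReal (∫ s in 0..b, volPoly m a s) := by
            rw [lintegral_Ioc_ofReal_eq_intervalIntegral
              (Continuous.integrableOn_Ioc (by fun_prop)) (by linarith)
              fun t ht => volPoly_nonneg m ha (by linarith [ht.1]),
              intervalIntegral.integral_comp_add_left (volPoly m a)]
            simp
    have hpos : ∫⁻ t in Set.Ioc 0 a, g t = ENNReal.ofReal (∫ s in 0..a, volPoly m s b) :=
      calc ∫⁻ t in Set.Ioc 0 a, g t
          = ∫⁻ t in Set.Ioc 0 a, ENNReal.ofReal (volPoly m (a - t) b) := by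
            refine setLIntegral_congr_fun measurableSet_Ioc fun t ht => ?_
            rw [← ih (by linarith [ht.2]) hb]
            simp only [g, max_eq_left ht.1.le, max_eq_right (neg_nonpos.mpr ht.1.le), sub_zero]
        _ = ENNReal.ofReal (∫ s in 0..a, volPoly m s b) := by
            rw [lintegral_Ioc_ofReal_eq_intervalIntegral
              (Continuous.integrableOn_Ioc (by fun_prop)) ha
              fun t ht => volPoly_nonneg m (by linarith [ht.2]) hb,
              intervalIntegral.integral_comp_sub_left (fun s => volPoly m s b)]
            simp
    rw [volume_posNegBall_succ, volPoly_succ, ENNReal.ofReal_add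
      (intervalIntegral.integral_nonneg hb fun s hs => volPoly_nonneg m ha hs.1)
      (intervalIntegral.integral_nonneg ha fun s hs => volPoly_nonneg m hs.1 hb),
      ← hneg, ← hpos, ← lintegral_union measurableSet_Ioc
        (Set.Ioc_disjoint_Ioc_of_le le_rfl), Set.Ioc_union_Ioc_eq_Ioc (by linarith) ha,
      setLIntegral_congr Ioc_ae_eq_Icc,
      setLIntegral_eq_of_support_subset (support_volume_posNegBall_slice_subset m a b)]

theorem stmt_18_general (m r : ℕ) :
    MeasureTheory.volume
        {x : Fin m → ℝ | (∑ i, max (x i) 0) ≤ (r : ℝ) ∧ (∑ i, max (-x i) 0) ≤ (r : ℝ)} =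
      ENNReal.ofReal ((r : ℝ) ^ m / m.factorial * (2 * m).choose m) := by
  rw [← volPoly_self]
  exact volume_posNegBall m r.cast_nonneg r.cast_nonneg

/-- The volume of the convex hull in `ℝ^m` of the `d_a`-ball
`S_m(r, r) ⊂ ℤ^m` equals `(r^m / m!)·C(2m, m)`. -/
theorem stmt_18 (m r : ℕ) (hm : 1 ≤ m) (hr : 1 ≤ r) :
    MeasureTheory.volume
        {x : Fin m → ℝ | (∑ i, max (x i) 0) ≤ (r : ℝ) ∧ (∑ i, max (-x i) 0) ≤ (r : ℝ)} =
      ENNReal.ofReal ((r : ℝ) ^ m / m.factorial * (2 * m).choose m) :=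
  stmt_18_general m r
end

section
/- For any codeword x ∈ △_n^{q−1} with exactly i nonzero coordinates, and integers 0 ≤ r ≤ min(h, i), the number of distinct vectors obtainable from x by r deletions followed by h − r insertions is at least C(i, r)·C(q − 1 + h − 2r, h − r). -/
/-!
Choose an `r`-subset `A` of the support of `x` and delete one symbol from each coordinate in `A`,
then insert `h - r` symbols into the coordinates outside `A`, i.e. add a vector `t ≥ 0` of weight
`h - r` supported on `Aᶜ`. There are `C(i, r)` choices of `A` and `C(q - r + (h - r) - 1, h - r)`
choices of `t`, and all results are distinct: `A` is recovered as the set of coordinates where the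
result is smaller than `x`, and then `t` as the difference.
-/

open Finset

variable {ι : Type*} [Fintype ι] [DecidableEq ι]

def delInsResults (x : ι → ℤ) (r s : ℕ) : Set (ι → ℤ) :=
  {z | ∃ f g : ι → ℤ, (∀ j, 0 ≤ f j) ∧ (∀ j, 0 ≤ g j) ∧
    (∑ j, f j = (r : ℤ)) ∧ (∑ j, g j = (s : ℤ)) ∧ f ≤ x ∧ z = x - f + g}

theorem delInsResults_finite (x : ι → ℤ) (r s : ℕ) : (delInsResults x r s).Finite := by
  refine ((Set.finite_Icc 0 x).prod (Set.finite_Icc 0 fun _ => (s : ℤ))).image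
    (fun p : (ι → ℤ) × (ι → ℤ) => x - p.1 + p.2) |>.subset ?_
  rintro z ⟨f, g, hf, hg, -, hgs, hfx, rfl⟩
  refine ⟨(f, g), ⟨⟨hf, hfx⟩, hg, fun j => ?_⟩, rfl⟩
  rw [← hgs]
  exact single_le_sum (fun k _ => hg k) (mem_univ j)

def deleteInsert (x : ι → ℤ) (A : Finset ι) (t : ι →₀ ℕ) : ι → ℤ :=
  fun j => x j - (if j ∈ A then 1 else 0) + t j

theorem deleteInsert_lt_iff {x : ι → ℤ} {A : Finset ι} {t : ι →₀ ℕ} (ht : t.support ⊆ Aᶜ)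
    (j : ι) : deleteInsert x A t j < x j ↔ j ∈ A := by
  by_cases hj : j ∈ A
  · have : t j = 0 := Finsupp.notMem_support_iff.1 fun hjt => mem_compl.1 (ht hjt) hj
    simp [deleteInsert, hj, this]
  · simp [deleteInsert, hj]

theorem deleteInsert_injOn (x : ι → ℤ) :
    Set.InjOn (fun p : (_ : Finset ι) × (ι →₀ ℕ) => deleteInsert x p.1 p.2)
      {p | p.2.support ⊆ p.1ᶜ} := by
  rintro ⟨A, t⟩ hA ⟨B, u⟩ hB (hxtu : deleteInsert x A t = deleteInsert x B u)
  obtain rfl : A = B := by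
    ext j
    rw [← deleteInsert_lt_iff hA j, ← deleteInsert_lt_iff hB j, hxtu]
  obtain rfl : t = u := by
    ext j
    simpa [deleteInsert] using congrFun hxtu j
  rfl

theorem deleteInsert_mem_delInsResults {x : ι → ℤ} (hx : ∀ j, 0 ≤ x j) {r s : ℕ}
    {A : Finset ι} (hA : A ⊆ ({j | x j ≠ 0} : Finset ι)) (hAr : #A = r) {t : ι →₀ ℕ}
    (ht : t ∈ finsuppAntidiag Aᶜ s) : deleteInsert x A t ∈ delInsResults x r s := by
  obtain ⟨hts, htA⟩ := mem_finsuppAntidiag.1 ht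
  refine ⟨fun j => if j ∈ A then 1 else 0, fun j => t j, fun j => by dsimp only; split_ifs <;> simp,
    fun j => by simp, by simp [hAr], ?_, fun j => ?_, by ext j; simp [deleteInsert]⟩
  · rw [← hts, Nat.cast_sum]
    refine (sum_subset (subset_univ _) fun j _ hj => ?_).symm
    simpa using Finsupp.notMem_support_iff.1 fun h => hj (htA h)
  · have hxj := hx j
    dsimp only
    split_ifs with hj
    · have : x j ≠ 0 := (mem_filter.1 (hA hj)).2
      omega
    · exact hxj

theorem choose_mul_choose_le_ncard_delInsResults {x : ι → ℤ} (hx : ∀ j, 0 ≤ x j) (r s : ℕ) :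
    (#{j | x j ≠ 0}).choose r * (Fintype.card ι - r + s - 1).choose s ≤
      (delInsResults x r s).ncard := by
  let P := (powersetCard r {j | x j ≠ 0}).sigma fun A => finsuppAntidiag Aᶜ s
  have hP : #P = (#{j | x j ≠ 0}).choose r * (Fintype.card ι - r + s - 1).choose s := by
    rw [card_sigma, ← card_powersetCard, ← smul_eq_mul, ← sum_const]
    refine sum_congr rfl fun A hA => ?_
    rw [card_finsuppAntidiag_nat_eq_choose, card_compl, (mem_powersetCard.1 hA).2]
  rw [← hP, ← Set.ncard_coe_finset]
  refine Set.ncard_le_ncard_of_injOn _ (fun p hp => ?_)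
    ((deleteInsert_injOn x).mono fun p hp => ?_) (delInsResults_finite x r s)
  all_goals obtain ⟨hA, ht⟩ := mem_sigma.1 hp
  · exact deleteInsert_mem_delInsResults hx (mem_powersetCard.1 hA).1 (mem_powersetCard.1 hA).2 ht
  · exact (mem_finsuppAntidiag.1 ht).2

theorem stmt_19_general (q h r i : ℕ) (hq : 2 ≤ q)
    (hr : r ≤ h) (hri : r ≤ i)
    (x : Fin q → ℤ) (hx : ∀ j, 0 ≤ x j)
    (hi : (Finset.univ.filter fun j => x j ≠ 0).card = i) :
    i.choose r * (q - 1 + h - 2 * r).choose (h - r) ≤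
      Set.ncard {z : Fin q → ℤ | ∃ f g : Fin q → ℤ,
        (∀ j, 0 ≤ f j) ∧ (∀ j, 0 ≤ g j) ∧
        (∑ j, f j = (r : ℤ)) ∧ (∑ j, g j = ((h - r : ℕ) : ℤ)) ∧
        f ≤ x ∧ z = x - f + g} := by
  have hiq : i ≤ q := hi ▸ (card_filter_le _ _).trans_eq (card_fin q)
  have key := choose_mul_choose_le_ncard_delInsResults hx r (h - r)
  rw [hi, Fintype.card_fin, show q - r + (h - r) - 1 = q - 1 + h - 2 * r by omega] at key
  exact key

/-- For `x ∈ △_n^{q−1}` with exactly `i` nonzero coordinates and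
`0 ≤ r ≤ min(h, i)`, the number of vectors obtainable from `x` by `r` deletions
followed by `h − r` insertions is at least `C(i, r)·C(q − 1 + h − 2r, h − r)`. -/
theorem stmt_19 (q n h r i : ℕ) (hq : 2 ≤ q) (hh : 1 ≤ h) (hn : h ≤ n)
    (hr : r ≤ h) (hri : r ≤ i)
    (x : Fin q → ℤ) (hx : ∀ j, 0 ≤ x j) (hxs : ∑ j, x j = n)
    (hi : (Finset.univ.filter fun j => x j ≠ 0).card = i) :
    i.choose r * (q - 1 + h - 2 * r).choose (h - r) ≤
      Set.ncard {z : Fin q → ℤ | ∃ f g : Fin q → ℤ,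
        (∀ j, 0 ≤ f j) ∧ (∀ j, 0 ≤ g j) ∧
        (∑ j, f j = (r : ℤ)) ∧ (∑ j, g j = ((h - r : ℕ) : ℤ)) ∧
        f ≤ x ∧ z = x - f + g} :=
  stmt_19_general q h r i hq hr hri x hx hi
end
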